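/- arXiv:2007.04596 — 2 statements merged into one kernel-verified Lean document; each statement's English description precedes it below -/
import Mathlib

section
/- Let (w, ξ_w) be a pair of random vectors in ℝ^d × ℝ^d with w ≠ 0 almost surely and suitable integrability, and let (v, ξ_v) be an independent identically distributed copy. For any integer k ≥ 0, E[⟨w̄, v̄⟩^{2k} (⟨ξ_w, v⟩⟨w, ξ_v⟩ + ⟨w, ξ_v⟩²)] = (1/2) E[⟨w̄, v̄⟩^{2k} (⟨w, ξ_v⟩ + ⟨v, ξ_w⟩)²] ≥ 0, where w̄ = w/‖w‖ and v̄ = v/‖v‖. -/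
open MeasureTheory ProbabilityTheory RealInnerProductSpace

/-!
Independence together with equal distribution makes the pair exchangeable: `(X, Y)` and `(Y, X)`
have the same law. The weight `c = ⟪w̄, v̄⟫ ^ (2k)` is symmetric, nonnegative and at most `1`, and
swapping the copies exchanges `a = ⟪ξ_w, v⟫` and `b = ⟪w, ξ_v⟫`; hence `E[c a²] = E[c b²]`, and
expanding `c (a + b)² = c a² + c b² + 2 c a b` gives `E[c (a b + b²)] = ½ E[c (a + b)²] ≥ 0`.
The cross term is integrable because `|c a b| ≤ (‖w‖²‖ξ_w‖² + ‖v‖²‖ξ_v‖²) / 2`; when `c b²` is not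
integrable, neither integrand is, and both Bochner integrals are `0`.
-/

namespace ProbabilityTheory

variable {Ω α : Type*} [MeasurableSpace Ω] [MeasurableSpace α] {μ : Measure Ω}
  [IsFiniteMeasure μ] {X Y : Ω → α}

theorem IndepFun.identDistrib_prodMk_swap (hind : IndepFun X Y μ) (hid : IdentDistrib X Y μ μ) :
    IdentDistrib (fun ω => (X ω, Y ω)) (fun ω => (Y ω, X ω)) μ μ where
  aemeasurable_fst := hid.aemeasurable_fst.prodMk hid.aemeasurable_snd
  aemeasurable_snd := hid.aemeasurable_snd.prodMk hid.aemeasurable_fst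
  map_eq := by
    rw [(indepFun_iff_map_prod_eq_prod_map_map hid.aemeasurable_fst hid.aemeasurable_snd).1 hind,
      (indepFun_iff_map_prod_eq_prod_map_map hid.aemeasurable_snd hid.aemeasurable_fst).1
        hind.symm, hid.map_eq]

end ProbabilityTheory

section

variable {Ω : Type*} [MeasurableSpace Ω] {μ : Measure Ω} {C A B : Ω → ℝ}

theorem integral_mul_add_sq_eq_half_integral_mul_add_sq (hC : ∀ ω, 0 ≤ C ω)
    (hCAB : Integrable (fun ω => C ω * (A ω * B ω)) μ)
    (hAB : IdentDistrib (fun ω => C ω * A ω ^ 2) (fun ω => C ω * B ω ^ 2) μ μ) :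
    ∫ ω, C ω * (A ω * B ω + B ω ^ 2) ∂μ = 1 / 2 * ∫ ω, C ω * (B ω + A ω) ^ 2 ∂μ := by
  have hLHS : (fun ω => C ω * (A ω * B ω + B ω ^ 2))
      = fun ω => C ω * (A ω * B ω) + C ω * B ω ^ 2 := by
    funext ω; ring
  have hRHS : (fun ω => C ω * (B ω + A ω) ^ 2)
      = fun ω => C ω * A ω ^ 2 + C ω * B ω ^ 2 + 2 * (C ω * (A ω * B ω)) := by
    funext ω; ring
  by_cases hB : Integrable (fun ω => C ω * B ω ^ 2) μ
  · have hA : Integrable (fun ω => C ω * A ω ^ 2) μ := hAB.integrable_iff.2 hB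
    have hAB2 : Integrable (fun ω => C ω * A ω ^ 2 + C ω * B ω ^ 2) μ := hA.add hB
    rw [hLHS, hRHS, integral_add hCAB hB, integral_add hAB2 (hCAB.const_mul 2),
      integral_add hA hB, integral_const_mul, hAB.integral_eq]
    ring
  · have hL : ¬ Integrable (fun ω => C ω * (A ω * B ω + B ω ^ 2)) μ := by
      rw [hLHS, integrable_add_iff_integrable_right' hCAB]
      exact hB
    -- `C (B + A)²` differs from `C A² + C B² ≥ C B² ≥ 0` by the integrable `2 C A B`.
    have hR : ¬ Integrable (fun ω => C ω * (B ω + A ω) ^ 2) μ := by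
      rw [hRHS, integrable_add_iff_integrable_left' (hCAB.const_mul 2)]
      refine fun hsum => hB (hsum.mono hAB.aemeasurable_snd.aestronglyMeasurable
        (ae_of_all _ fun ω => ?_))
      have hA2 : 0 ≤ C ω * A ω ^ 2 := mul_nonneg (hC ω) (sq_nonneg _)
      have hB2 : 0 ≤ C ω * B ω ^ 2 := mul_nonneg (hC ω) (sq_nonneg _)
      rw [Real.norm_of_nonneg hB2, Real.norm_of_nonneg (add_nonneg hA2 hB2)]
      linarith
    rw [integral_undef hL, integral_undef hR, mul_zero]

end

section

variable {E : Type*} [NormedAddCommGroup E] [InnerProductSpace ℝ E]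

theorem abs_real_inner_inv_norm_smul_pow_le_one (x y : E) (n : ℕ) :
    |⟪‖x‖⁻¹ • x, ‖y‖⁻¹ • y⟫ ^ n| ≤ 1 := by
  have h : ⟪‖x‖⁻¹ • x, ‖y‖⁻¹ • y⟫ = ⟪x, y⟫ / (‖x‖ * ‖y‖) := by
    rw [real_inner_smul_left, real_inner_smul_right, div_eq_mul_inv, mul_inv]
    ring
  rw [abs_pow, h]
  exact pow_le_one₀ (abs_nonneg _) (abs_real_inner_div_norm_mul_norm_le_one x y)

theorem abs_mul_inner_mul_inner_le {c : ℝ} (hc : |c| ≤ 1) (p q : E × E) :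
    |c * (⟪p.2, q.1⟫ * ⟪p.1, q.2⟫)| ≤ ((‖p.1‖ * ‖p.2‖) ^ 2 + (‖q.1‖ * ‖q.2‖) ^ 2) / 2 := by
  have hinner : |⟪p.2, q.1⟫ * ⟪p.1, q.2⟫| ≤ (‖p.1‖ * ‖p.2‖) * (‖q.1‖ * ‖q.2‖) := by
    rw [abs_mul]
    calc |⟪p.2, q.1⟫| * |⟪p.1, q.2⟫| ≤ (‖p.2‖ * ‖q.1‖) * (‖p.1‖ * ‖q.2‖) :=
          mul_le_mul (abs_real_inner_le_norm _ _) (abs_real_inner_le_norm _ _)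
            (abs_nonneg _) (by positivity)
      _ = (‖p.1‖ * ‖p.2‖) * (‖q.1‖ * ‖q.2‖) := by ring
  calc |c * (⟪p.2, q.1⟫ * ⟪p.1, q.2⟫)| ≤ 1 * ((‖p.1‖ * ‖p.2‖) * (‖q.1‖ * ‖q.2‖)) := by
        rw [abs_mul]
        exact mul_le_mul hc hinner (abs_nonneg _) zero_le_one
    _ ≤ ((‖p.1‖ * ‖p.2‖) ^ 2 + (‖q.1‖ * ‖q.2‖) ^ 2) / 2 := by
        nlinarith [sq_nonneg (‖p.1‖ * ‖p.2‖ - ‖q.1‖ * ‖q.2‖)]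

end

theorem exchangeable_square_identity_general {d : ℕ} (k : ℕ)
    {Ω : Type*} [MeasurableSpace Ω] (μ : Measure Ω) [IsProbabilityMeasure μ]
    (X Y : Ω → EuclideanSpace ℝ (Fin d) × EuclideanSpace ℝ (Fin d))
    (hXY_indep : IndepFun X Y μ)
    (hXY_ident : IdentDistrib X Y μ μ)
    (hint : Integrable (fun ω => (‖(X ω).1‖ * ‖(X ω).2‖) ^ 2) μ) :
    (∫ ω, ⟪(‖(X ω).1‖⁻¹ • (X ω).1 : EuclideanSpace ℝ (Fin d)),
            ‖(Y ω).1‖⁻¹ • (Y ω).1⟫ ^ (2 * k) *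
          (⟪(X ω).2, (Y ω).1⟫ * ⟪(X ω).1, (Y ω).2⟫ + ⟪(X ω).1, (Y ω).2⟫ ^ 2) ∂μ)
      = (1 / 2) *
        ∫ ω, ⟪(‖(X ω).1‖⁻¹ • (X ω).1 : EuclideanSpace ℝ (Fin d)),
              ‖(Y ω).1‖⁻¹ • (Y ω).1⟫ ^ (2 * k) *
            (⟪(X ω).1, (Y ω).2⟫ + ⟪(Y ω).1, (X ω).2⟫) ^ 2 ∂μ ∧
    0 ≤ (1 / 2) *
        ∫ ω, ⟪(‖(X ω).1‖⁻¹ • (X ω).1 : EuclideanSpace ℝ (Fin d)),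
              ‖(Y ω).1‖⁻¹ • (Y ω).1⟫ ^ (2 * k) *
            (⟪(X ω).1, (Y ω).2⟫ + ⟪(Y ω).1, (X ω).2⟫) ^ 2 ∂μ := by
  set c := fun p q : EuclideanSpace ℝ (Fin d) × EuclideanSpace ℝ (Fin d) =>
    ⟪(‖p.1‖⁻¹ • p.1 : EuclideanSpace ℝ (Fin d)), ‖q.1‖⁻¹ • q.1⟫ ^ (2 * k)
  have hc_nonneg (p q) : 0 ≤ c p q := (even_two_mul k).pow_nonneg _
  have hc_symm (p q) : c q p = c p q := by simp only [c, real_inner_comm]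
  have hX := hXY_ident.aemeasurable_fst
  have hY := hXY_ident.aemeasurable_snd
  have hCA2_CB2 : IdentDistrib (fun ω => c (X ω) (Y ω) * ⟪(X ω).2, (Y ω).1⟫ ^ 2)
      (fun ω => c (X ω) (Y ω) * ⟪(X ω).1, (Y ω).2⟫ ^ 2) μ μ := by
    have h := (hXY_indep.identDistrib_prodMk_swap hXY_ident).comp
      (u := fun r => c r.1 r.2 * ⟪r.1.2, r.2.1⟫ ^ 2) (by fun_prop)
    simpa only [Function.comp_def, hc_symm (X _), real_inner_comm (X _).1] using h
  have hintY : Integrable (fun ω => (‖(Y ω).1‖ * ‖(Y ω).2‖) ^ 2) μ :=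
    (hXY_ident.comp (u := fun p : EuclideanSpace ℝ (Fin d) × EuclideanSpace ℝ (Fin d) =>
      (‖p.1‖ * ‖p.2‖) ^ 2) (by fun_prop)).integrable_iff.1 hint
  have hCAB : Integrable
      (fun ω => c (X ω) (Y ω) * (⟪(X ω).2, (Y ω).1⟫ * ⟪(X ω).1, (Y ω).2⟫)) μ :=
    ((hint.add hintY).div_const 2).mono' (by fun_prop) (ae_of_all _ fun ω =>
      abs_mul_inner_mul_inner_le (abs_real_inner_inv_norm_smul_pow_le_one _ _ _) (X ω) (Y ω))
  simp only [real_inner_comm (X _).2]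
  exact ⟨integral_mul_add_sq_eq_half_integral_mul_add_sq (fun _ => hc_nonneg _ _) hCAB hCA2_CB2,
    mul_nonneg one_half_pos.le (integral_nonneg fun ω => mul_nonneg (hc_nonneg _ _) (sq_nonneg _))⟩

theorem exchangeable_square_identity {d : ℕ} (k : ℕ)
    {Ω : Type*} [MeasurableSpace Ω] (μ : Measure Ω) [IsProbabilityMeasure μ]
    (X Y : Ω → EuclideanSpace ℝ (Fin d) × EuclideanSpace ℝ (Fin d))
    (hXY_indep : IndepFun X Y μ)
    (hXY_ident : IdentDistrib X Y μ μ)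
    (hw_pos : ∀ᵐ ω ∂μ, 0 < ‖(X ω).1‖)
    (hint : Integrable (fun ω => (‖(X ω).1‖ * ‖(X ω).2‖) ^ 2) μ) :
    (∫ ω, ⟪(‖(X ω).1‖⁻¹ • (X ω).1 : EuclideanSpace ℝ (Fin d)),
            ‖(Y ω).1‖⁻¹ • (Y ω).1⟫ ^ (2 * k) *
          (⟪(X ω).2, (Y ω).1⟫ * ⟪(X ω).1, (Y ω).2⟫ + ⟪(X ω).1, (Y ω).2⟫ ^ 2) ∂μ)
      = (1 / 2) *
        ∫ ω, ⟪(‖(X ω).1‖⁻¹ • (X ω).1 : EuclideanSpace ℝ (Fin d)),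
              ‖(Y ω).1‖⁻¹ • (Y ω).1⟫ ^ (2 * k) *
            (⟪(X ω).1, (Y ω).2⟫ + ⟪(Y ω).1, (X ω).2⟫) ^ 2 ∂μ ∧
    0 ≤ (1 / 2) *
        ∫ ω, ⟪(‖(X ω).1‖⁻¹ • (X ω).1 : EuclideanSpace ℝ (Fin d)),
              ‖(Y ω).1‖⁻¹ • (Y ω).1⟫ ^ (2 * k) *
            (⟪(X ω).1, (Y ω).2⟫ + ⟪(Y ω).1, (X ω).2⟫) ^ 2 ∂μ :=
  exchangeable_square_identity_general k μ X Y hXY_indep hXY_ident hint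
end

section
/- Let r ≥ 2 and let d ≥ r² be a multiple of r. Suppose Q is a positive integer with Q² · (d/r)² · (r/d)^r < 1. Then there exist Q families C^{(1)},…,C^{(Q)}, each consisting of d/r pairwise disjoint r-element subsets of [d] (i.e., each C^{(j)} is a partition of [d] into r-sets), such that no r-element set appears in two distinct families: for all j ≠ j' and all i, i', C_i^{(j)} ≠ C_{i'}^{(j')}. -/
/-- Base-`m` digits determine a number below `m ^ s`. -/
lemma digits_inj_aux (m : ℕ) (hm : 0 < m) :
    ∀ s, ∀ j j' : ℕ, j < m ^ s → j' < m ^ s →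
      (∀ t, t < s → j / m ^ t % m = j' / m ^ t % m) → j = j' := by
  intro s
  induction s with
  | zero => intro j j' hj hj' _; simp [pow_zero] at hj hj'; omega
  | succ s ih =>
    intro j j' hj hj' h
    have h0 : j % m = j' % m := by simpa using h 0 (Nat.succ_pos s)
    have hdig : ∀ t, t < s → (j / m) / m ^ t % m = (j' / m) / m ^ t % m := by
      intro t ht
      have := h (t + 1) (by omega)
      rw [Nat.div_div_eq_div_mul, Nat.div_div_eq_div_mul]
      rwa [pow_succ'] at this
    have hjm : j / m < m ^ s := by
      rw [Nat.div_lt_iff_lt_mul hm]; rwa [← pow_succ]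
    have hjm' : j' / m < m ^ s := by
      rw [Nat.div_lt_iff_lt_mul hm]; rwa [← pow_succ]
    have hdd := ih (j / m) (j' / m) hjm hjm' hdig
    have e1 := Nat.div_add_mod j m
    have e2 := Nat.div_add_mod j' m
    rw [hdd, h0] at e1
    exact e1.symm.trans e2

theorem many_disjoint_partitions_no_repeat (r d Q : ℕ) (hr : 2 ≤ r)
    (hd : r ^ 2 ≤ d) (hdvd : r ∣ d) (hQ : 0 < Q)
    (hbound : (Q : ℝ) ^ 2 * ((d : ℝ) / r) ^ 2 * ((r : ℝ) / d) ^ r < 1) :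
    ∃ C : Fin Q → Fin (d / r) → Finset (Fin d),
      (∀ j i, (C j i).card = r) ∧
      (∀ j, ∀ i i' : Fin (d / r), i ≠ i' → Disjoint (C j i) (C j i')) ∧
      (∀ j, Finset.univ.biUnion (C j) = Finset.univ) ∧
      (∀ j j' : Fin Q, j ≠ j' → ∀ i i', C j i ≠ C j' i') := by
  set m := d / r with hm_def
  have hr0 : 0 < r := by omega
  have hd0 : 0 < d := lt_of_lt_of_le (by positivity) hd
  have hmr : m * r = d := Nat.div_mul_cancel hdvd
  have hrd : r ≤ d := le_trans (by nlinarith) hd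
  have hm0 : 0 < m := Nat.div_pos hrd hr0
  have hrm : r ≤ m := by
    have h1 : r * r ≤ m * r := by rw [hmr]; nlinarith
    exact Nat.le_of_mul_le_mul_right h1 hr0
  -- turn the real bound into a natural-number bound
  have hdR : (d : ℝ) = (m : ℝ) * r := by exact_mod_cast hmr.symm
  have hrR : (0 : ℝ) < r := by exact_mod_cast hr0
  have hmR : (0 : ℝ) < m := by exact_mod_cast hm0
  have h1 : (d : ℝ) / r = m := by rw [hdR]; field_simp
  have h2 : (r : ℝ) / d = 1 / m := by rw [hdR]; rw [div_eq_div_iff (by positivity) (by positivity)]; ring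
  rw [h1, h2, one_div, inv_pow, ← div_eq_mul_inv, div_lt_one (by positivity)] at hbound
  have hnat : Q ^ 2 * m ^ 2 < m ^ r := by exact_mod_cast hbound
  have hQpow : Q < m ^ (r - 2) := by
    have hle : Q * m ^ 2 ≤ Q ^ 2 * m ^ 2 :=
      Nat.mul_le_mul_right _ (Nat.le_self_pow (by norm_num) Q)
    have hsplit : m ^ r = m ^ (r - 2) * m ^ 2 := by
      rw [← pow_add]; congr 1; omega
    have : Q * m ^ 2 < m ^ (r - 2) * m ^ 2 := lt_of_le_of_lt hle (hsplit ▸ hnat)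
    exact Nat.lt_of_mul_lt_mul_right this
  have hQm1 : Q ≤ m ^ (r - 1) :=
    le_of_lt (lt_of_lt_of_le hQpow (Nat.pow_le_pow_right hm0 (by omega)))
  -- the digit shifts
  set b : ℕ → ℕ → ℕ := fun j k => if k = 0 then 0 else j / m ^ (k - 1) % m with hb_def
  -- the element map
  have hlt : ∀ (x k : ℕ), k < r → x % m * r + k < d := by
    intro x k hk
    have h1 : x % m < m := Nat.mod_lt _ hm0
    calc x % m * r + k < x % m * r + r := by omega
      _ = (x % m + 1) * r := by ring
      _ ≤ m * r := Nat.mul_le_mul_right r h1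
      _ = d := hmr
  set F : Fin Q → Fin m → Fin r → Fin d :=
    fun j i k => ⟨(i + b j k) % m * r + k, hlt _ _ k.isLt⟩ with hF_def
  -- key: equality of elements forces equal k and equal residues
  have hF : ∀ (j j' : Fin Q) (i i' : Fin m) (k k' : Fin r), F j i k = F j' i' k' →
      k = k' ∧ ((i : ℕ) + b j k) % m = ((i' : ℕ) + b j' k') % m := by
    intro j j' i i' k k' h
    have hv : ((i : ℕ) + b j k) % m * r + (k : ℕ)
        = ((i' : ℕ) + b j' k') % m * r + (k' : ℕ) := congrArg Fin.val h
    have hk : (k : ℕ) = (k' : ℕ) := by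
      have h2 := congrArg (· % r) hv
      rwa [Nat.add_comm _ (k : ℕ), Nat.add_comm _ (k' : ℕ),
        Nat.add_mul_mod_self_right, Nat.add_mul_mod_self_right,
        Nat.mod_eq_of_lt k.isLt, Nat.mod_eq_of_lt k'.isLt] at h2
    refine ⟨Fin.ext hk, ?_⟩
    rw [hk] at hv ⊢
    exact Nat.eq_of_mul_eq_mul_right hr0 (Nat.add_right_cancel hv)
  -- cancellation: (i + c) % m = (i' + c) % m with i, i' < m gives i = i'
  have hcancel : ∀ (a a' c : ℕ), a < m → a' < m → (a + c) % m = (a' + c) % m → a = a' := by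
    intro a a' c ha ha' h
    have : a % m = a' % m := Nat.ModEq.add_right_cancel' c h
    rwa [Nat.mod_eq_of_lt ha, Nat.mod_eq_of_lt ha'] at this
  refine ⟨fun j i => Finset.image (F j i) Finset.univ, ?_, ?_, ?_, ?_⟩
  · -- cardinality
    intro j i
    rw [Finset.card_image_of_injective _ (fun k k' h => (hF j j i i k k' h).1)]
    simp
  · -- disjointness
    intro j i i' hne
    rw [Finset.disjoint_left]
    intro x hx hx'
    simp only [Finset.mem_image, Finset.mem_univ, true_and] at hx hx'
    obtain ⟨k, hk⟩ := hx
    obtain ⟨k', hk'⟩ := hx'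
    obtain ⟨hkk, hres⟩ := hF j j i i' k k' (hk.trans hk'.symm)
    subst hkk
    exact hne (Fin.ext (hcancel _ _ _ i.isLt i'.isLt hres))
  · -- union
    intro j
    ext x
    simp only [Finset.mem_biUnion, Finset.mem_univ, Finset.mem_image, true_and, iff_true]
    have hxd : (x : ℕ) < m * r := by rw [hmr]; exact x.isLt
    set q : ℕ := (x : ℕ) / r with hq_def
    set k : ℕ := (x : ℕ) % r with hk_def
    have hkr : k < r := Nat.mod_lt _ hr0
    have hqm : q < m := by rw [hq_def, Nat.div_lt_iff_lt_mul hr0]; exact hxd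
    have hcm : b (j : ℕ) k % m < m := Nat.mod_lt _ hm0
    set c : ℕ := b (j : ℕ) k % m with hc_def
    refine ⟨⟨(q + (m - c)) % m, Nat.mod_lt _ hm0⟩, ⟨k, hkr⟩, ?_⟩
    apply Fin.ext
    show ((q + (m - c)) % m + b (j : ℕ) k) % m * r + k = (x : ℕ)
    have hres : ((q + (m - c)) % m + b (j : ℕ) k) % m = q := by
      calc ((q + (m - c)) % m + b (j : ℕ) k) % m
          = (q + (m - c) + b (j : ℕ) k) % m := Nat.mod_add_mod _ _ _
        _ = (q + (m - c) + b (j : ℕ) k % m) % m := (Nat.add_mod_mod _ _ _).symm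
        _ = (q + m) % m := by rw [← hc_def]; congr 1; omega
        _ = q % m := Nat.add_mod_right q m
        _ = q := Nat.mod_eq_of_lt hqm
    rw [hres, hq_def, hk_def, mul_comm]
    exact Nat.div_add_mod _ _
  · -- no repeated blocks
    intro j j' hne i i' hCeq
    apply hne
    have hmem : ∀ k : Fin r, ∃ k' : Fin r, F j' i' k' = F j i k := by
      intro k
      have hCeq' : Finset.image (F j i) Finset.univ = Finset.image (F j' i') Finset.univ := hCeq
      have : F j i k ∈ Finset.image (F j' i') Finset.univ := by
        rw [← hCeq']; exact Finset.mem_image_of_mem _ (Finset.mem_univ k)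
      simpa using this
    have hall : ∀ k : Fin r, ((i : ℕ) + b j k) % m = ((i' : ℕ) + b j' k) % m := by
      intro k
      obtain ⟨k', hk'⟩ := hmem k
      obtain ⟨hkk, hres⟩ := hF j' j i' i k' k hk'
      subst hkk
      exact hres.symm
    have hii : (i : ℕ) = (i' : ℕ) := by
      have h0 := hall ⟨0, by omega⟩
      have h0' : (i : ℕ) % m = (i' : ℕ) % m := by simpa [hb_def] using h0
      rwa [Nat.mod_eq_of_lt i.isLt, Nat.mod_eq_of_lt i'.isLt] at h0' 
    have hdig : ∀ t, t < r - 1 → (j : ℕ) / m ^ t % m = (j' : ℕ) / m ^ t % m := by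
      intro t ht
      have h := hall ⟨t + 1, by omega⟩
      have h' : ((i : ℕ) + (j : ℕ) / m ^ t % m) % m
          = ((i' : ℕ) + (j' : ℕ) / m ^ t % m) % m := by simpa [hb_def] using h
      rw [hii] at h'
      have c1 : (j : ℕ) / m ^ t % m < m := Nat.mod_lt _ hm0
      have c2 : (j' : ℕ) / m ^ t % m < m := Nat.mod_lt _ hm0
      have hmodeq : ((j : ℕ) / m ^ t % m) % m = ((j' : ℕ) / m ^ t % m) % m :=
        Nat.ModEq.add_left_cancel' (i' : ℕ) h'
      rwa [Nat.mod_eq_of_lt c1, Nat.mod_eq_of_lt c2] at hmodeq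
    have hjQ : (j : ℕ) < m ^ (r - 1) := lt_of_lt_of_le j.isLt hQm1
    have hjQ' : (j' : ℕ) < m ^ (r - 1) := lt_of_lt_of_le j'.isLt hQm1
    exact Fin.ext (digits_inj_aux m hm0 (r - 1) _ _ hjQ hjQ' hdig)
end
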